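/- In a chain graph G (a graph with directed and undirected edges and no directed pseudocycles), if there is a route from node i to node j with no collider section and avoiding a set Z ⊆ V∖{i,j}, then there is a path (a route with distinct nodes) from i to j with no collider section avoiding Z. -/

import Mathlib

/-- Edge types occurring along a route in a chain graph: an undirected edge, a
directed edge traversed forwards, or a directed edge traversed backwards. -/
inductive EdgeT : Type
  | undir : EdgeT
  | fwd : EdgeT
  | bwd : EdgeT
deriving DecidableEq

/-- A chain graph: a graph with undirected and directed edges and no directed
pseudocycles (no descending route from a node to itself using a directed edge). -/
structure ChainGraph (V : Type) where
  ue : V → V → Prop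
  de : V → V → Prop
  ue_symm : ∀ a b, ue a b → ue b a
  no_pseudocycle :
    ∀ a b, de a b → ¬ Relation.ReflTransGen (fun x y => ue x y ∨ de x y) b a

/-- `IsRoute G l ρ t` : `ρ 0, ρ 1, …, ρ l` is a route in `G`, where `t k`
records the type and direction of the edge used between `ρ k` and `ρ (k+1)`. -/
def IsRoute {V : Type} (G : ChainGraph V) (l : ℕ) (ρ : ℕ → V) (t : ℕ → EdgeT) : Prop :=
  ∀ k, k < l →
    match t k with
    | EdgeT.undir => G.ue (ρ k) (ρ (k + 1))
    | EdgeT.fwd => G.de (ρ k) (ρ (k + 1))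
    | EdgeT.bwd => G.de (ρ (k + 1)) (ρ k)

/-- `IsSection l t a b` : the subroute from position `a` to position `b` is a
section, i.e. a maximal undirected subroute. -/
def IsSection (l : ℕ) (t : ℕ → EdgeT) (a b : ℕ) : Prop :=
  a ≤ b ∧ b ≤ l ∧ (∀ k, a ≤ k → k < b → t k = EdgeT.undir) ∧
    (a = 0 ∨ t (a - 1) ≠ EdgeT.undir) ∧ (b = l ∨ t b ≠ EdgeT.undir)

/-- A collider section: a section entered by a directed edge pointing forwards
and left by a directed edge pointing backwards. -/
def IsColliderSection (l : ℕ) (t : ℕ → EdgeT) (a b : ℕ) : Prop :=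
  IsSection l t a b ∧ 0 < a ∧ b < l ∧ t (a - 1) = EdgeT.fwd ∧ t b = EdgeT.bwd

lemma lemA {l : ℕ} {t : ℕ → EdgeT} (hnocol : ∀ a b, ¬ IsColliderSection l t a b)
    {p q : ℕ} (hpq : p < q) (hql : q < l) (hp : t p = EdgeT.fwd)
    (hq : t q = EdgeT.bwd) : False := by
  classical
  set m := Nat.findGreatest (fun k => t k = EdgeT.fwd) q with hm
  have hm_ge : p ≤ m := Nat.le_findGreatest (le_of_lt hpq) hp
  have hm_le : m ≤ q := Nat.findGreatest_le q
  have hm_fwd : t m = EdgeT.fwd := by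
    have := Nat.findGreatest_spec (P := fun k => t k = EdgeT.fwd) (le_of_lt hpq) hp
    simpa [hm] using this
  have hm_lt : m < q := by
    rcases lt_or_eq_of_le hm_le with h | h
    · exact h
    · rw [h, hq] at hm_fwd; exact absurd hm_fwd (by simp)
  have hex : ∃ k, m < k ∧ t k ≠ EdgeT.undir := ⟨q, hm_lt, by simp [hq]⟩
  set m' := Nat.find hex with hm'
  obtain ⟨hmm', hm'ne⟩ : m < m' ∧ t m' ≠ EdgeT.undir := Nat.find_spec hex
  have hm'le : m' ≤ q := Nat.find_min' hex ⟨hm_lt, by simp [hq]⟩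
  have hm'bwd : t m' = EdgeT.bwd := by
    have hnf : t m' ≠ EdgeT.fwd := by
      have := Nat.findGreatest_is_greatest (P := fun k => t k = EdgeT.fwd) (by rw [← hm]; exact hmm') hm'le
      simpa using this
    cases h : t m' <;> simp_all
  refine hnocol (m + 1) m' ⟨⟨by omega, by omega, ?_, Or.inr (by simp [hm_fwd]),
    Or.inr hm'ne⟩, by omega, by omega, by simpa using hm_fwd, hm'bwd⟩
  intro k hk1 hk2
  have := Nat.find_min hex hk2
  by_contra hne
  exact this ⟨by omega, hne⟩

lemma excise {V : Type} (G : ChainGraph V) {l a b : ℕ} {ρ : ℕ → V} {t : ℕ → EdgeT}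
    (hab : a < b) (hbl : b ≤ l) (heq : ρ a = ρ b)
    (hroute : IsRoute G l ρ t) (hnocol : ∀ p q, ¬ IsColliderSection l t p q) :
    IsRoute G (l - (b - a)) (fun k => if k ≤ a then ρ k else ρ (k + (b - a)))
      (fun k => if k < a then t k else t (k + (b - a))) ∧
    (∀ p q, ¬ IsColliderSection (l - (b - a))
      (fun k => if k < a then t k else t (k + (b - a))) p q) := by
  constructor
  · intro k hk
    by_cases hka : k < a
    · have h1 : (if k < a then t k else t (k + (b - a))) = t k := if_pos hka
      have h2 : (if k ≤ a then ρ k else ρ (k + (b - a))) = ρ k := if_pos (le_of_lt hka)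
      have h3 : (if k + 1 ≤ a then ρ (k + 1) else ρ (k + 1 + (b - a))) = ρ (k + 1) :=
        if_pos hka
      simp only [h1, h2, h3]
      exact hroute k (by omega)
    · have h1 : (if k < a then t k else t (k + (b - a))) = t (k + (b - a)) := if_neg hka
      have h2 : (if k ≤ a then ρ k else ρ (k + (b - a))) = ρ (k + (b - a)) := by
        by_cases hka' : k ≤ a
        · have : k = a := by omega
          rw [if_pos hka', this, heq]
          congr 1
          omega
        · exact if_neg hka'
      have h3 : (if k + 1 ≤ a then ρ (k + 1) else ρ (k + 1 + (b - a))) = ρ (k + (b - a) + 1) := by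
        rw [if_neg (by omega)]
        congr 1
        omega
      simp only [h1, h2, h3]
      exact hroute (k + (b - a)) (by omega)
  · rintro p q ⟨⟨hpq, hql', hund, hleft, hright⟩, hp0, hql2, hfwd, hbwd⟩
    dsimp only at hund hleft hright hfwd hbwd
    by_cases hqa : q < a
    · -- entirely in prefix: original collider at (p, q)
      rw [if_pos (show p - 1 < a by omega)] at hfwd
      rw [if_pos hqa] at hbwd
      refine hnocol p q ⟨⟨hpq, by omega, ?_, Or.inr (by simp [hfwd]),
        Or.inr (by simp [hbwd])⟩, hp0, by omega, hfwd, hbwd⟩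
      intro k hk1 hk2
      have := hund k hk1 hk2
      rwa [if_pos (by omega)] at this
    · by_cases hpa : a < p
      · -- entirely in suffix: original collider at (p + (b-a), q + (b-a))
        rw [if_neg (show ¬ p - 1 < a by omega)] at hfwd
        rw [if_neg (show ¬ q < a by omega)] at hbwd
        rw [show p - 1 + (b - a) = p + (b - a) - 1 by omega] at hfwd
        refine hnocol (p + (b - a)) (q + (b - a)) ⟨⟨by omega, by omega, ?_,
          Or.inr (by simp [hfwd]), Or.inr (by simp [hbwd])⟩,
          by omega, by omega, hfwd, hbwd⟩
        intro k hk1 hk2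
        have := hund (k - (b - a)) (by omega) (by omega)
        rw [if_neg (by omega)] at this
        rwa [show k - (b - a) + (b - a) = k by omega] at this
      · -- straddling: p ≤ a ≤ q; use lemA
        rw [if_pos (show p - 1 < a by omega)] at hfwd
        rw [if_neg (show ¬ q < a by omega)] at hbwd
        exact absurd hbwd (fun hQ => lemA hnocol (p := p - 1) (q := q + (b - a))
          (by omega) (by omega) hfwd hQ)


/-- In a chain graph, if there is a route from `i` to `j` with no collider
section avoiding `Z ⊆ V \ {i,j}`, then there is a path (a route with distinct
nodes) from `i` to `j` with no collider section avoiding `Z`. -/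
theorem route_no_collider_to_path {V : Type} (G : ChainGraph V)
    (i j : V) (Z : Set V) (hiZ : i ∉ Z) (hjZ : j ∉ Z)
    (l : ℕ) (ρ : ℕ → V) (t : ℕ → EdgeT)
    (hroute : IsRoute G l ρ t) (hi : ρ 0 = i) (hj : ρ l = j)
    (hnocol : ∀ a b, ¬ IsColliderSection l t a b)
    (hZ : ∀ k, k ≤ l → ρ k ∉ Z) :
    ∃ (l' : ℕ) (ρ' : ℕ → V) (t' : ℕ → EdgeT),
      IsRoute G l' ρ' t' ∧ ρ' 0 = i ∧ ρ' l' = j ∧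
      Set.InjOn ρ' (Set.Iic l') ∧
      (∀ a b, ¬ IsColliderSection l' t' a b) ∧
      (∀ k, k ≤ l' → ρ' k ∉ Z) := by
  induction l using Nat.strong_induction_on generalizing ρ t with
  | _ l IH =>
    by_cases hinj : Set.InjOn ρ (Set.Iic l)
    · exact ⟨l, ρ, t, hroute, hi, hj, hinj, hnocol, hZ⟩
    · have key : ∀ a b : ℕ, a < b → b ≤ l → ρ a = ρ b →
          ∃ (l' : ℕ) (ρ' : ℕ → V) (t' : ℕ → EdgeT),
            IsRoute G l' ρ' t' ∧ ρ' 0 = i ∧ ρ' l' = j ∧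
            Set.InjOn ρ' (Set.Iic l') ∧
            (∀ a b, ¬ IsColliderSection l' t' a b) ∧
            (∀ k, k ≤ l' → ρ' k ∉ Z) := by
        intro a b hab hbl heq
        obtain ⟨hr', hc'⟩ := excise G hab hbl heq hroute hnocol
        refine IH (l - (b - a)) (by omega) _ _ hr' ?_ ?_ hc' ?_
        · simpa using hi
        · by_cases h : l - (b - a) ≤ a
          · have h1 : l - (b - a) = a := by omega
            have h2 : b = l := by omega
            rw [if_pos h, h1, heq, h2, hj]
          · simp only [if_neg h]
            rw [show l - (b - a) + (b - a) = l by omega, hj]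
        · intro k hk
          split
          · exact hZ k (by omega)
          · exact hZ (k + (b - a)) (by omega)
      rw [Set.InjOn] at hinj
      push_neg at hinj
      obtain ⟨a, ha, b, hb, hab, hne⟩ := hinj
      rcases Ne.lt_or_gt hne with h | h
      · exact key a b h hb hab
      · exact key b a h ha hab.symm
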